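/- Let ξ₁, ξ₂ ∈ ℂ* and Y₂₁, Y₃₁, Y₄₂, Y₄₃ ∈ ℂ*. With S^{(m)}(ξ) = [[−ξ^m, i],[i,0]], T₂₁ = [[0, iY₂₁],[iY₂₁⁻¹,0]], T₄₃ = [[0, iY₄₃],[iY₄₃⁻¹,0]], T₃₁ = diag(Y₃₁, Y₃₁⁻¹), T₄₂ = diag(Y₄₂, Y₄₂⁻¹), the q-Mathieu monodromy M = (S^{(−1)}(ξ₁))⁻¹ T₃₁⁻¹ S^{(0)} T₄₃⁻¹ (S^{(0)})⁻¹ T₄₂ S^{(1)}(ξ₂) T₂₁ has trace equal to (Y₃₁Y₄₂Y₄₃Y₂₁)(ξ₂/ξ₁) + (Y₄₃Y₂₁)/(Y₃₁Y₄₂) + Y₂₁/(Y₃₁Y₄₂Y₄₃) + (Y₃₁Y₄₂Y₄₃)/Y₂₁ − (Y₄₂Y₄₃Y₂₁/Y₃₁)·ξ₂ − (Y₃₁Y₄₃Y₂₁/Y₄₂)·ξ₁⁻¹. -/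

import Mathlib

/-!
Every factor has determinant one, so its inverse is its adjugate. After inverting, the trace is a
Laurent polynomial in `ξ₁, ξ₂` and the `Y`'s with coefficients in `ℤ[i]`, and the claimed formula
is an identity of such polynomials modulo `i² = -1`.
-/

open Complex Matrix

theorem Matrix.inv_fin_two_of_det_eq_one {R : Type*} [CommRing R] {a b c d : R}
    (h : a * d - b * c = 1) : !![a, b; c, d]⁻¹ = !![d, -b; -c, a] := by
  rw [Matrix.inv_def, det_fin_two_of, h, Ring.inverse_one, one_smul, adjugate_fin_two_of]

namespace QMathieu

/-- The paper's `S^{(m)}(ξ)` is `sMat (ξ ^ m)`. -/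
noncomputable def sMat (x : ℂ) : Matrix (Fin 2) (Fin 2) ℂ := !![-x, I; I, 0]

noncomputable def tAnti (y : ℂ) : Matrix (Fin 2) (Fin 2) ℂ := !![0, I * y; I * y⁻¹, 0]

noncomputable def tDiag (y : ℂ) : Matrix (Fin 2) (Fin 2) ℂ := !![y, 0; 0, y⁻¹]

theorem sMat_inv (x : ℂ) : (sMat x)⁻¹ = !![0, -I; -I, -x] := by
  rw [sMat, inv_fin_two_of_det_eq_one (by rw [← sq, I_sq]; ring)]

theorem tAnti_inv {y : ℂ} (hy : y ≠ 0) : (tAnti y)⁻¹ = tAnti (-y) := by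
  rw [tAnti, inv_fin_two_of_det_eq_one, tAnti, inv_neg, mul_neg, mul_neg]
  linear_combination (-(y * y⁻¹)) * I_sq + mul_inv_cancel₀ hy

theorem tDiag_inv {y : ℂ} (hy : y ≠ 0) : (tDiag y)⁻¹ = tDiag y⁻¹ := by
  rw [tDiag, inv_fin_two_of_det_eq_one, tDiag, inv_inv, neg_zero]
  simpa using mul_inv_cancel₀ hy

end QMathieu

open QMathieu

theorem qMathieu_monodromy_trace_general (ξ₁ ξ₂ Y21 Y31 Y42 Y43 : ℂ)
    (h31 : Y31 ≠ 0) (h43 : Y43 ≠ 0) :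
    let Sm1 : Matrix (Fin 2) (Fin 2) ℂ := !![-(ξ₁⁻¹), I; I, 0]
    let S0 : Matrix (Fin 2) (Fin 2) ℂ := !![(-1 : ℂ), I; I, 0]
    let S1 : Matrix (Fin 2) (Fin 2) ℂ := !![-ξ₂, I; I, 0]
    let T21 : Matrix (Fin 2) (Fin 2) ℂ := !![0, I * Y21; I * Y21⁻¹, 0]
    let T43 : Matrix (Fin 2) (Fin 2) ℂ := !![0, I * Y43; I * Y43⁻¹, 0]
    let T31 : Matrix (Fin 2) (Fin 2) ℂ := !![Y31, 0; 0, Y31⁻¹]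
    let T42 : Matrix (Fin 2) (Fin 2) ℂ := !![Y42, 0; 0, Y42⁻¹]
    let M := Sm1⁻¹ * T31⁻¹ * S0 * T43⁻¹ * S0⁻¹ * T42 * S1 * T21
    M.trace = (Y31 * Y42 * Y43 * Y21) * (ξ₂ / ξ₁)
      + (Y43 * Y21) / (Y31 * Y42) + Y21 / (Y31 * Y42 * Y43)
      + (Y31 * Y42 * Y43) / Y21
      - (Y42 * Y43 * Y21 / Y31) * ξ₂ - (Y31 * Y43 * Y21 / Y42) * ξ₁⁻¹ := by
  change trace ((sMat ξ₁⁻¹)⁻¹ * (tDiag Y31)⁻¹ * sMat 1 * (tAnti Y43)⁻¹ * (sMat 1)⁻¹ *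
    tDiag Y42 * sMat ξ₂ * tAnti Y21) = _
  rw [sMat_inv, sMat_inv, tDiag_inv h31, tAnti_inv h43]
  simp only [sMat, tDiag, tAnti, mul_fin_two, trace_fin_two_of]
  grind [I_sq]

/-- Monodromy trace of the q-Mathieu (local ℙ¹×ℙ¹) equation in WKB coordinates. -/
theorem qMathieu_monodromy_trace (ξ₁ ξ₂ Y21 Y31 Y42 Y43 : ℂ)
    (hξ₁ : ξ₁ ≠ 0) (hξ₂ : ξ₂ ≠ 0)
    (h21 : Y21 ≠ 0) (h31 : Y31 ≠ 0) (h42 : Y42 ≠ 0) (h43 : Y43 ≠ 0) :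
    let Sm1 : Matrix (Fin 2) (Fin 2) ℂ := !![-(ξ₁⁻¹), I; I, 0]
    let S0 : Matrix (Fin 2) (Fin 2) ℂ := !![(-1 : ℂ), I; I, 0]
    let S1 : Matrix (Fin 2) (Fin 2) ℂ := !![-ξ₂, I; I, 0]
    let T21 : Matrix (Fin 2) (Fin 2) ℂ := !![0, I * Y21; I * Y21⁻¹, 0]
    let T43 : Matrix (Fin 2) (Fin 2) ℂ := !![0, I * Y43; I * Y43⁻¹, 0]
    let T31 : Matrix (Fin 2) (Fin 2) ℂ := !![Y31, 0; 0, Y31⁻¹]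
    let T42 : Matrix (Fin 2) (Fin 2) ℂ := !![Y42, 0; 0, Y42⁻¹]
    let M := Sm1⁻¹ * T31⁻¹ * S0 * T43⁻¹ * S0⁻¹ * T42 * S1 * T21
    M.trace = (Y31 * Y42 * Y43 * Y21) * (ξ₂ / ξ₁)
      + (Y43 * Y21) / (Y31 * Y42) + Y21 / (Y31 * Y42 * Y43)
      + (Y31 * Y42 * Y43) / Y21
      - (Y42 * Y43 * Y21 / Y31) * ξ₂ - (Y31 * Y43 * Y21 / Y42) * ξ₁⁻¹ :=
  qMathieu_monodromy_trace_general ξ₁ ξ₂ Y21 Y31 Y42 Y43 h31 h43
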